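/- arXiv:1503.04897 — 2 statements merged into one kernel-verified Lean document; each statement's English description precedes it below -/
import Mathlib

section
/- Let F be a field of characteristic zero, E a field extension of F with finrank F E = 2, and N = Algebra.norm F : E → F the field norm. For c ∈ F with c ≠ 0 and an F-linear automorphism g : E ≃ₗ[F] E, the following are equivalent: (i) N(g(x)) = c · N(x) for all x ∈ E and the determinant of g as an F-linear map equals c; (ii) there exists e ∈ E with N(e) = c such that g(x) = e · x for all x ∈ E. In particular, the group of such similitudes (the F-points of GSO(2, η)) is exactly the group of multiplications by elements of E^×, and the similitude character corresponds to the norm map, with image N(E^×). -/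
/-!
Normalise `g` to `f = e⁻¹ g` with `e = g 1`: then `f` fixes `1`, preserves the norm and has
determinant `1`. In a quadratic algebra `N (1 + x) = 1 + Tr x + N x`, so `f` also preserves the
trace. In a basis `{1, α}` write `f α = r + a α`; then `a = det f = 1`, and comparing traces gives
`2 r = 0`, so `f` is the identity.
-/
open Module Algebra

section Quadratic
variable {F E : Type*} [Field F] [CommRing E] [Algebra F E]

theorem Algebra.norm_one_add_of_finrank_eq_two (h2 : finrank F E = 2) (x : E) :
    norm F (1 + x) = 1 + trace F E x + norm F x := by
  have : Module.Finite F E := Module.finite_of_finrank_eq_succ h2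
  let b := Module.finBasisOfFinrankEq F E h2
  rw [norm_eq_matrix_det b, norm_eq_matrix_det b, trace_eq_matrix_trace b, map_add, map_one,
    Matrix.det_fin_two, Matrix.det_fin_two, Matrix.trace_fin_two]
  simp only [Matrix.add_apply, Matrix.one_apply_eq, ne_eq, zero_ne_one, not_false_eq_true,
    Matrix.one_apply_ne, one_ne_zero]
  ring

theorem Algebra.trace_map_eq_of_norm_map_eq (h2 : finrank F E = 2) {f : E →ₗ[F] E}
    (hf1 : f 1 = 1) (hN : ∀ x, norm F (f x) = norm F x) (x : E) :
    trace F E (f x) = trace F E x := by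
  have h := hN (1 + x)
  rw [map_add, hf1, norm_one_add_of_finrank_eq_two h2, norm_one_add_of_finrank_eq_two h2, hN x]
    at h
  simpa using h

theorem LinearMap.eq_id_of_map_one_of_trace_map_eq_of_det_eq_one (h2 : finrank F E = 2)
    (h2F : (2 : F) ≠ 0) {f : E →ₗ[F] E} (hf1 : f 1 = 1)
    (htr : ∀ x, Algebra.trace F E (f x) = Algebra.trace F E x) (hdet : LinearMap.det f = 1) :
    f = LinearMap.id := by
  have : Nontrivial E := Module.nontrivial_of_finrank_eq_succ h2
  obtain ⟨α, hα⟩ := exists_linearIndependent_pair_of_one_lt_finrank (R := F)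
    (h2 ▸ one_lt_two) (one_ne_zero (α := E))
  let b : Basis (Fin 2) F E := basisOfLinearIndependentOfCardEqFinrank hα (by simp [h2])
  have hb : ⇑b = ![1, α] := coe_basisOfLinearIndependentOfCardEqFinrank hα _
  have hb0 : b 0 = 1 := by simp [hb]
  have hb1 : b 1 = α := by simp [hb]
  set r := b.repr (f α) 0
  set a := b.repr (f α) 1
  have hfα : f α = r • 1 + a • α := by
    simpa [Fin.sum_univ_two, hb] using (b.sum_repr (f α)).symm
  have ha : a = 1 := by
    rw [← hdet, ← LinearMap.det_toMatrix b, Matrix.det_fin_two]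
    have hfb0 : f (b 0) = b 0 := by rw [hb0, hf1]
    simp [LinearMap.toMatrix_apply, hfb0, hb1, a]
  have hr : r = 0 := by
    have := htr α
    rw [hfα, ha, one_smul, map_add, map_smul, ← map_one (algebraMap F E), trace_algebraMap, h2,
      add_eq_right, smul_eq_zero] at this
    simpa [h2F] using this
  refine b.ext fun i => ?_
  fin_cases i
  · simp [hb, hf1]
  · simp [hb, hfα, ha, hr]
end Quadratic

/-- For a quadratic extension `E/F` of a field of characteristic zero, an `F`-linear
automorphism `g` of `E` is a similitude of the norm form with factor `c` and determinant `c`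
if and only if `g` is multiplication by an element `e ∈ E` of norm `c`.  In particular
`GSO(2, η)(F) ≅ E^×` and the similitude character is the norm map, with image `N(E^×)`. -/
theorem GSO_two_similitudes_are_norm_multiplications
    (F E : Type*) [Field F] [CharZero F] [Field E] [Algebra F E]
    [FiniteDimensional F E] (h2 : Module.finrank F E = 2)
    (c : F) (hc : c ≠ 0) (g : E ≃ₗ[F] E) :
    ((∀ x : E, Algebra.norm F (g x) = c * Algebra.norm F x) ∧
        LinearMap.det g.toLinearMap = c) ↔
    ∃ e : E, Algebra.norm F e = c ∧ ∀ x : E, g x = e * x := by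
  constructor
  · rintro ⟨hN, hdet⟩
    have hNe : Algebra.norm F (g 1) = c := by simpa using hN 1
    have hg1 : g 1 ≠ 0 := g.map_ne_zero_iff.mpr one_ne_zero
    set f := Algebra.lmul F E (g 1)⁻¹ ∘ₗ g.toLinearMap
    have hf1 : f 1 = 1 := inv_mul_cancel₀ hg1
    have hfN : ∀ x, Algebra.norm F (f x) = Algebra.norm F x := fun x => by
      change Algebra.norm F ((g 1)⁻¹ * g x) = _
      rw [map_mul, Algebra.norm_inv, hNe, hN, inv_mul_cancel_left₀ hc]
    have hfdet : LinearMap.det f = 1 := by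
      rw [LinearMap.det_comp, ← Algebra.norm_apply, Algebra.norm_inv, hNe, hdet, inv_mul_cancel₀ hc]
    have hf : f = LinearMap.id := LinearMap.eq_id_of_map_one_of_trace_map_eq_of_det_eq_one h2
      two_ne_zero hf1 (Algebra.trace_map_eq_of_norm_map_eq h2 hf1 hfN) hfdet
    refine ⟨g 1, hNe, fun x => ?_⟩
    rw [← inv_mul_eq_iff_eq_mul₀ hg1]
    exact LinearMap.congr_fun hf x
  · rintro ⟨e, rfl, hg⟩
    have hge : g.toLinearMap = Algebra.lmul F E e := LinearMap.ext hg
    exact ⟨fun x => by rw [hg, map_mul], by rw [hge, ← Algebra.norm_apply]⟩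
end

section
/- Let G be an abelian group and let A, B, C be subgroups of G such that A ⊔ C = G (every element of G is a product of an element of A and an element of C). Then A ⊓ (B ⊔ C) = A ⊓ (B ⊔ (A ⊓ C)) if and only if for every x ∈ B there exists y ∈ B ⊓ C such that x · y ∈ A. -/
/-- Abstract form of the criterion for Σ₀-strong multiplicity one at one place: if `A`,
`B`, `C` are subgroups of an abelian group `G` with `A ⊔ C = G`, then
`A ⊓ (B ⊔ C) = A ⊓ (B ⊔ (A ⊓ C))` if and only if for every `x ∈ B` there is
`y ∈ B ⊓ C` with `x * y ∈ A`. -/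
theorem inf_sup_eq_iff_exists_mul_mem
    (G : Type*) [CommGroup G] (A B C : Subgroup G) (h : A ⊔ C = ⊤) :
    A ⊓ (B ⊔ C) = A ⊓ (B ⊔ (A ⊓ C)) ↔
      ∀ x ∈ B, ∃ y ∈ B ⊓ C, x * y ∈ A := by
  constructor
  · intro he x hx
    -- write x = a * c with a ∈ A, c ∈ C
    have hxtop : x ∈ A ⊔ C := by rw [h]; trivial
    rw [Subgroup.mem_sup] at hxtop
    obtain ⟨a, ha, c, hc, hac⟩ := hxtop
    have haBC : a ∈ A ⊓ (B ⊔ C) := by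
      refine ⟨ha, ?_⟩
      have : a = x * c⁻¹ := by rw [← hac]; group
      rw [this]
      exact mul_mem (Subgroup.mem_sup_left hx) (Subgroup.mem_sup_right (inv_mem hc))
    rw [he, Subgroup.mem_inf] at haBC
    obtain ⟨-, haBAC⟩ := haBC
    rw [Subgroup.mem_sup] at haBAC
    obtain ⟨b, hb, d, hd, hbd⟩ := haBAC
    rw [Subgroup.mem_inf] at hd
    refine ⟨x⁻¹ * b, Subgroup.mem_inf.mpr ⟨mul_mem (inv_mem hx) hb, ?_⟩, ?_⟩
    · have : x⁻¹ * b = c⁻¹ * d⁻¹ := by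
        have hx' : x = b * d * c := by rw [hbd, hac]
        rw [hx']; group
      rw [this]
      exact mul_mem (inv_mem hc) (inv_mem hd.2)
    · have : x * (x⁻¹ * b) = b := by group
      rw [this]
      have : b = a * d⁻¹ := by rw [← hbd]; group
      rw [this]
      exact mul_mem ha (inv_mem hd.1)
  · intro hB
    refine le_antisymm ?_ (inf_le_inf_left _ (sup_le_sup_left inf_le_right _))
    intro a ha'
    rw [Subgroup.mem_inf] at ha'
    obtain ⟨ha, haBC⟩ := ha'
    rw [Subgroup.mem_inf]
    rw [Subgroup.mem_sup] at haBC
    obtain ⟨b, hb, c, hc, hbc⟩ := haBC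
    obtain ⟨y, hy, hbyA⟩ := hB b hb
    rw [Subgroup.mem_inf] at hy
    obtain ⟨hyB, hyC⟩ := hy
    refine ⟨ha, ?_⟩
    have : a = (b * y) * (y⁻¹ * c) := by rw [← hbc]; group
    rw [this]
    refine mul_mem (Subgroup.mem_sup_left (mul_mem hb hyB)) (Subgroup.mem_sup_right (Subgroup.mem_inf.mpr ⟨?_, mul_mem (inv_mem hyC) hc⟩))
    have : y⁻¹ * c = (b * y)⁻¹ * a := by rw [← hbc]; group
    rw [this]
    exact mul_mem (inv_mem hbyA) ha
end
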